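/- Pointwise control of the low-high part of the lacunary triangle maximal operator: sup_{l∈Z} |T_l^{0∞}(f,g)(x)| ≤ C Mf(x) · S_lac g(x), where T_l^{0∞}(f,g)(x) = ∫_{O(d)} (f * φ_l)(x - 2^{-l} R u) g(x - 2^{-l} R v) dμ(R), M is the Hardy–Littlewood maximal function, and S_lac is the lacunary spherical maximal function. -/

import Mathlib

open MeasureTheory Metric Filter
open scoped ENNReal NNReal FourierTransform

noncomputable section

variable (d : ℕ)

/-- The product measurable structure on `d × d` real matrices. -/
instance matrixMeasurableSpace : MeasurableSpace (Matrix (Fin d) (Fin d) ℝ) :=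
  inferInstanceAs (MeasurableSpace (Fin d → Fin d → ℝ))

/-- Action of a matrix on a point of `ℝ^d`. -/
def rotAct (R : Matrix (Fin d) (Fin d) ℝ) (u : EuclideanSpace ℝ (Fin d)) :
    EuclideanSpace ℝ (Fin d) := WithLp.toLp 2 (R.mulVec u)

/-- The `L¹`-normalized dilation `φ_l(x) = 2^{ld} φ(2^l x)`, `l ∈ ℤ`. -/
def dilate (φ : EuclideanSpace ℝ (Fin d) → ℂ) (l : ℤ) (x : EuclideanSpace ℝ (Fin d)) : ℂ :=
  (2 : ℝ) ^ (l * d) * φ ((2 : ℝ) ^ l • x)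

/-- Convolution `(f ⋆ h)(x) = ∫ f(x - y) h(y) dy`. -/
def conv (f h : EuclideanSpace ℝ (Fin d) → ℂ) (x : EuclideanSpace ℝ (Fin d)) : ℂ :=
  ∫ y, f (x - y) * h y

/-- The low-high piece `T_l^{0∞}(f,g)(x) = ∫_{O(d)} (f*φ_l)(x - 2^{-l}Ru) g(x - 2^{-l}Rv) dμ(R)`. -/
def triangleLH (μ : Measure (Matrix (Fin d) (Fin d) ℝ)) (u v : EuclideanSpace ℝ (Fin d))
    (φ : EuclideanSpace ℝ (Fin d) → ℂ) (l : ℤ) (f g : EuclideanSpace ℝ (Fin d) → ℂ)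
    (x : EuclideanSpace ℝ (Fin d)) : ℂ :=
  ∫ R, conv d f (dilate d φ l) (x - (2 : ℝ) ^ (-l) • rotAct d R u) *
    g (x - (2 : ℝ) ^ (-l) • rotAct d R v) ∂μ

/-- The centered Hardy–Littlewood maximal function. -/
def hlMaximal (f : EuclideanSpace ℝ (Fin d) → ℂ) (x : EuclideanSpace ℝ (Fin d)) : ℝ≥0∞ :=
  ⨆ r : {r : ℝ // 0 < r}, (volume (ball x (r : ℝ)))⁻¹ * ∫⁻ y in ball x (r : ℝ), ‖f y‖₊

/-- The lacunary spherical maximal function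
`S_lac g(x) = sup_{l ∈ ℤ} ∫_{S^{d-1}} |g(x - 2^{-l} y)| dσ(y)`. -/
def lacSphMaximal (σ : Measure (EuclideanSpace ℝ (Fin d)))
    (g : EuclideanSpace ℝ (Fin d) → ℂ) (x : EuclideanSpace ℝ (Fin d)) : ℝ≥0∞ :=
  ⨆ l : ℤ, ∫⁻ y, ‖g (x - (2 : ℝ) ^ (-l) • y)‖₊ ∂σ

/-!
For `‖y‖ ≤ 2^{-l}` one has `|(f * φ_l)(x - y)| ≲ Mf(x)`: dominate `|φ|` by a sum of indicators
of dyadic balls, each contributing an average of `|f|` over a ball of comparable radius containing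
`x`, and the Schwartz decay of `φ` makes these contributions summable. As `‖2^{-l} R u‖ = 2^{-l}` for orthogonal
`R`, this bounds the first factor of `T_l^{0∞}` uniformly in `R`. What remains is
`∫ |g(x - 2^{-l} R v)| dμ(R)`, and the image of Haar measure under `R ↦ R v` is the normalized
surface measure, so this is a spherical average of `|g|` at radius `2^{-l}`, bounded by `S_lac g(x)`.
-/

variable {d}

instance matrixBorelSpace : BorelSpace (Matrix (Fin d) (Fin d) ℝ) :=
  inferInstanceAs (BorelSpace (Fin d → Fin d → ℝ))

instance matrixSecondCountableTopology : SecondCountableTopology (Matrix (Fin d) (Fin d) ℝ) :=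
  inferInstanceAs (SecondCountableTopology (Fin d → Fin d → ℝ))

lemma continuous_rotAct :
    Continuous fun p : Matrix (Fin d) (Fin d) ℝ × EuclideanSpace ℝ (Fin d) => rotAct d p.1 p.2 :=
  (PiLp.continuous_toLp 2 _).comp (continuous_fst.matrix_mulVec
    ((PiLp.continuous_ofLp 2 _).comp continuous_snd))

lemma continuous_rotAct_apply (v : EuclideanSpace ℝ (Fin d)) :
    Continuous fun R : Matrix (Fin d) (Fin d) ℝ => rotAct d R v :=
  continuous_rotAct.comp (continuous_id.prodMk continuous_const)

lemma rotAct_mul (R M : Matrix (Fin d) (Fin d) ℝ) (x : EuclideanSpace ℝ (Fin d)) :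
    rotAct d (R * M) x = rotAct d R (rotAct d M x) := by
  simp [rotAct, Matrix.mulVec_mulVec]

def rotActLinearIsometryEquiv {R : Matrix (Fin d) (Fin d) ℝ}
    (hR : R ∈ Matrix.orthogonalGroup (Fin d) ℝ) :
    EuclideanSpace ℝ (Fin d) ≃ₗᵢ[ℝ] EuclideanSpace ℝ (Fin d) :=
  Unitary.linearIsometryEquiv
    ⟨Matrix.toEuclideanCLM (n := Fin d) (𝕜 := ℝ) R, Unitary.map_mem Matrix.toEuclideanCLM hR⟩

lemma norm_rotAct {R : Matrix (Fin d) (Fin d) ℝ} (hR : R ∈ Matrix.orthogonalGroup (Fin d) ℝ)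
    (x : EuclideanSpace ℝ (Fin d)) : ‖rotAct d R x‖ = ‖x‖ :=
  (rotActLinearIsometryEquiv hR).norm_map x

lemma exists_mem_orthogonalGroup_rotAct_eq {v y : EuclideanSpace ℝ (Fin d)} (h : ‖v‖ = ‖y‖) :
    ∃ M ∈ Matrix.orthogonalGroup (Fin d) ℝ, rotAct d M v = y := by
  let e := Matrix.toEuclideanCLM (n := Fin d) (𝕜 := ℝ)
  let T := Unitary.linearIsometryEquiv.symm (Submodule.reflection (ℝ ∙ (v - y))ᗮ)
  have hT : e.symm T ∈ unitary (Matrix (Fin d) (Fin d) ℝ) := Unitary.map_mem e.symm T.2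
  refine ⟨e.symm T, hT, ?_⟩
  change e (e.symm T) v = y
  rw [StarAlgEquiv.apply_symm_apply]
  exact Submodule.reflection_sub h

section Haar

variable {μ : Measure (Matrix (Fin d) (Fin d) ℝ)}

lemma lintegral_mul_left_eq
    (hμinv : ∀ A ∈ Matrix.orthogonalGroup (Fin d) ℝ, μ.map (fun B => A * B) = μ)
    {A : Matrix (Fin d) (Fin d) ℝ} (hA : A ∈ Matrix.orthogonalGroup (Fin d) ℝ)
    {k : Matrix (Fin d) (Fin d) ℝ → ℝ≥0∞} (hk : Measurable k) :
    ∫⁻ B, k (A * B) ∂μ = ∫⁻ B, k B ∂μ := by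
  conv_rhs => rw [← hμinv A hA]
  exact (lintegral_map hk (continuous_const.matrix_mul continuous_id).measurable).symm

variable [IsProbabilityMeasure μ]

lemma lintegral_lintegral_star_mul (hμsupp : μ {A | A ∉ Matrix.orthogonalGroup (Fin d) ℝ} = 0)
    (hμinv : ∀ A ∈ Matrix.orthogonalGroup (Fin d) ℝ, μ.map (fun B => A * B) = μ)
    {k : Matrix (Fin d) (Fin d) ℝ → ℝ≥0∞} (hk : Measurable k) :
    ∫⁻ A, ∫⁻ B, k (star A * B) ∂μ ∂μ = ∫⁻ B, k B ∂μ := by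
  rw [lintegral_congr_ae (g := fun _ => ∫⁻ B, k B ∂μ), lintegral_const, measure_univ, mul_one]
  filter_upwards [ae_iff.mpr hμsupp] with A hA
  exact lintegral_mul_left_eq hμinv (Unitary.star_mem hA) hk

lemma lintegral_mul_right_eq (hμsupp : μ {A | A ∉ Matrix.orthogonalGroup (Fin d) ℝ} = 0)
    (hμinv : ∀ A ∈ Matrix.orthogonalGroup (Fin d) ℝ, μ.map (fun B => A * B) = μ)
    {T : Matrix (Fin d) (Fin d) ℝ} (hT : T ∈ Matrix.orthogonalGroup (Fin d) ℝ)
    {k : Matrix (Fin d) (Fin d) ℝ → ℝ≥0∞} (hk : Measurable k) :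
    ∫⁻ B, k (B * T) ∂μ = ∫⁻ B, k B ∂μ := by
  have hstar_mul : Continuous fun p : Matrix (Fin d) (Fin d) ℝ × Matrix (Fin d) (Fin d) ℝ =>
      star p.1 * p.2 :=
    continuous_fst.matrix_transpose.matrix_mul continuous_snd
  have hkT : Measurable fun B => k (B * T) :=
    hk.comp (continuous_id.matrix_mul continuous_const).measurable
  -- Left translation by `B T B⋆` turns `A⋆ B T` into `A⋆ B`.
  have hconj : ∀ᵐ B ∂μ, ∫⁻ A, k (star A * B * T) ∂μ = ∫⁻ A, k (star A * B) ∂μ := by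
    filter_upwards [ae_iff.mpr hμsupp] with B hB
    have hS : B * T * star B ∈ Matrix.orthogonalGroup (Fin d) ℝ :=
      mul_mem (mul_mem hB hT) (Unitary.star_mem hB)
    rw [← lintegral_mul_left_eq hμinv hS (k := fun A => k (star A * B * T))
      (hkT.comp (hstar_mul.comp (continuous_id.prodMk continuous_const)).measurable)]
    refine lintegral_congr fun A => congrArg k ?_
    simp only [star_mul, star_star, mul_assoc]
    rw [← mul_assoc (star B) B, Unitary.star_mul_self_of_mem hB, one_mul,
      Unitary.star_mul_self_of_mem hT, mul_one]
  calc ∫⁻ B, k (B * T) ∂μ = ∫⁻ A, ∫⁻ B, k (star A * B * T) ∂μ ∂μ :=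
        (lintegral_lintegral_star_mul hμsupp hμinv hkT).symm
    _ = ∫⁻ B, ∫⁻ A, k (star A * B * T) ∂μ ∂μ :=
        lintegral_lintegral_swap (hkT.comp hstar_mul.measurable).aemeasurable
    _ = ∫⁻ B, ∫⁻ A, k (star A * B) ∂μ ∂μ := lintegral_congr_ae hconj
    _ = ∫⁻ A, ∫⁻ B, k (star A * B) ∂μ ∂μ :=
        (lintegral_lintegral_swap (f := fun A B => k (star A * B))
          (hk.comp hstar_mul.measurable).aemeasurable).symm
    _ = ∫⁻ B, k B ∂μ := lintegral_lintegral_star_mul hμsupp hμinv hk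

/-- Both sides equal `∫∫ h (R y) dσ(y) dμ(R)`: integrate first in `y` using the invariance of `σ`,
or first in `R` using the right invariance of `μ` and the transitivity of `O(d)` on the sphere. -/
lemma lintegral_rotAct_eq_lintegral_sphere
    (hμsupp : μ {A | A ∉ Matrix.orthogonalGroup (Fin d) ℝ} = 0)
    (hμinv : ∀ A ∈ Matrix.orthogonalGroup (Fin d) ℝ, μ.map (fun B => A * B) = μ)
    {σ : Measure (EuclideanSpace ℝ (Fin d))} [IsProbabilityMeasure σ]
    (hσsupp : σ (Metric.sphere (0 : EuclideanSpace ℝ (Fin d)) 1)ᶜ = 0)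
    (hσinv : ∀ T : EuclideanSpace ℝ (Fin d) ≃ₗᵢ[ℝ] EuclideanSpace ℝ (Fin d), σ.map T = σ)
    {v : EuclideanSpace ℝ (Fin d)} (hv : ‖v‖ = 1)
    {h : EuclideanSpace ℝ (Fin d) → ℝ≥0∞} (hh : Measurable h) :
    ∫⁻ R, h (rotAct d R v) ∂μ = ∫⁻ y, h y ∂σ := by
  have hσ_rot : ∀ᵐ R ∂μ, ∫⁻ y, h (rotAct d R y) ∂σ = ∫⁻ y, h y ∂σ := by
    filter_upwards [ae_iff.mpr hμsupp] with R hR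
    let T := rotActLinearIsometryEquiv hR
    conv_rhs => rw [← hσinv T, lintegral_map hh T.continuous.measurable]
    rfl
  have hμ_rot : ∀ᵐ y ∂σ, ∫⁻ R, h (rotAct d R y) ∂μ = ∫⁻ R, h (rotAct d R v) ∂μ := by
    filter_upwards [ae_iff.mpr hσsupp] with y hy
    obtain ⟨M, hM, rfl⟩ := exists_mem_orthogonalGroup_rotAct_eq (v := v) (y := y)
      (by simpa [hv, eq_comm] using hy)
    simp only [← rotAct_mul]
    exact lintegral_mul_right_eq hμsupp hμinv hM (hh.comp (continuous_rotAct_apply v).measurable)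
  calc ∫⁻ R, h (rotAct d R v) ∂μ
      = ∫⁻ _ : EuclideanSpace ℝ (Fin d), ∫⁻ R, h (rotAct d R v) ∂μ ∂σ := by
        rw [lintegral_const, measure_univ, mul_one]
    _ = ∫⁻ y, ∫⁻ R, h (rotAct d R y) ∂μ ∂σ := (lintegral_congr_ae hμ_rot).symm
    _ = ∫⁻ R, ∫⁻ y, h (rotAct d R y) ∂σ ∂μ :=
        (lintegral_lintegral_swap (f := fun R y => h (rotAct d R y))
          (hh.comp continuous_rotAct.measurable).aemeasurable).symm
    _ = ∫⁻ y, h y ∂σ := by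
        rw [lintegral_congr_ae hσ_rot, lintegral_const, measure_univ, mul_one]

end Haar

lemma enorm_le_tsum_indicator_ball_of_decay {E F : Type*} [SeminormedAddCommGroup E]
    [SeminormedAddCommGroup F] {ψ : E → F} {N : ℕ} {C : ℝ}
    (hψ : ∀ w, (1 + ‖w‖) ^ N * ‖ψ w‖ ≤ C) (w : E) :
    ‖ψ w‖ₑ ≤ ∑' k : ℕ, (ball (0 : E) (2 ^ (k + 1))).indicator
      (fun _ => ENNReal.ofReal C * ((2 : ℝ≥0∞) ^ N)⁻¹ ^ k) w := by
  obtain ⟨n, hn_le, hn_lt⟩ := exists_nat_pow_near (le_add_of_nonneg_right (norm_nonneg w))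
    one_lt_two
  have hw : w ∈ ball (0 : E) (2 ^ (n + 1)) := by
    rw [mem_ball_zero_iff]; linarith
  refine le_trans ?_ (ENNReal.le_tsum n)
  rw [Set.indicator_of_mem hw, ← ofReal_norm]
  have hreal : ‖ψ w‖ ≤ C * ((2 : ℝ) ^ N)⁻¹ ^ n := by
    rw [inv_pow, ← pow_mul, mul_comm N, pow_mul, ← div_eq_mul_inv,
      le_div_iff₀ (by positivity), mul_comm]
    exact (mul_le_mul_of_nonneg_right (pow_le_pow_left₀ (by positivity) hn_le N)
      (norm_nonneg _)).trans (hψ w)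
  refine (ENNReal.ofReal_le_ofReal hreal).trans_eq ?_
  rw [ENNReal.ofReal_mul' (by positivity), ENNReal.ofReal_pow (by positivity),
    ENNReal.ofReal_inv_of_pos (by positivity), ENNReal.ofReal_pow zero_le_two, ENNReal.ofReal_ofNat]

lemma setLIntegral_ball_le_hlMaximal (f : EuclideanSpace ℝ (Fin d) → ℂ)
    (x : EuclideanSpace ℝ (Fin d)) {r : ℝ} (hr : 0 < r) :
    ∫⁻ y in ball x r, ‖f y‖ₑ ≤ volume (ball x r) * hlMaximal d f x := by
  rw [← ENNReal.inv_mul_le_iff (measure_ball_pos volume x hr).ne' measure_ball_lt_top.ne]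
  exact le_iSup (fun r : {r : ℝ // 0 < r} =>
    (volume (ball x (r : ℝ)))⁻¹ * ∫⁻ y in ball x (r : ℝ), ‖f y‖ₑ) ⟨r, hr⟩

lemma setLIntegral_ball_comp_sub {E : Type*} [NormedAddCommGroup E] [MeasurableSpace E]
    [BorelSpace E] {μ : Measure E} [μ.IsAddLeftInvariant] [μ.IsNegInvariant]
    (g : E → ℝ≥0∞) (z : E) (r : ℝ) :
    ∫⁻ y in ball 0 r, g (z - y) ∂μ = ∫⁻ w in ball z r, g w ∂μ := by
  have hpre : (fun y => z - y) ⁻¹' ball z r = ball 0 r := by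
    ext y; simp
  rw [← hpre]
  exact (μ.measurePreserving_sub_left z).setLIntegral_comp_preimage_emb
    (MeasurableEquiv.subLeft z).measurableEmbedding g _

lemma indicator_ball_smul {E M : Type*} [NormedAddCommGroup E] [NormedSpace ℝ E] [Zero M]
    {s : ℝ} (hs : 0 < s) (R : ℝ) (g : E → M) (y : E) :
    (ball (0 : E) R).indicator g (s • y) =
      (ball (0 : E) (R / s)).indicator (fun y => g (s • y)) y := by
  have hmem : s • y ∈ ball (0 : E) R ↔ y ∈ ball (0 : E) (R / s) := by
    rw [mem_ball_zero_iff, mem_ball_zero_iff, norm_smul, Real.norm_of_nonneg hs.le,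
      lt_div_iff₀ hs, mul_comm]
  by_cases hy : y ∈ ball (0 : E) (R / s)
  · rw [Set.indicator_of_mem hy, Set.indicator_of_mem (hmem.2 hy)]
  · rw [Set.indicator_of_notMem hy, Set.indicator_of_notMem (mt hmem.1 hy)]

lemma setLIntegral_ball_comp_sub_le_hlMaximal (f : EuclideanSpace ℝ (Fin d) → ℂ)
    {x z : EuclideanSpace ℝ (Fin d)} {ρ : ℝ} (hρ : 0 < ρ) (hzx : ‖z - x‖ ≤ ρ) :
    ∫⁻ y in ball 0 ρ, ‖f (z - y)‖ₑ ≤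
      ENNReal.ofReal ((2 * ρ) ^ d) * volume (ball (0 : EuclideanSpace ℝ (Fin d)) 1) *
        hlMaximal d f x := by
  have hball : ball z ρ ⊆ ball x (2 * ρ) := ball_subset_ball' (by rw [dist_eq_norm]; linarith)
  calc ∫⁻ y in ball 0 ρ, ‖f (z - y)‖ₑ = ∫⁻ w in ball z ρ, ‖f w‖ₑ :=
        setLIntegral_ball_comp_sub (fun w => ‖f w‖ₑ) z ρ
    _ ≤ volume (ball x (2 * ρ)) * hlMaximal d f x :=
        (lintegral_mono_set hball).trans (setLIntegral_ball_le_hlMaximal f x (by positivity))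
    _ = _ := by
        rw [Measure.addHaar_ball_of_pos volume x (by positivity), finrank_euclideanSpace_fin]

lemma lintegral_indicator_dyadic_ball_le_hlMaximal {f : EuclideanSpace ℝ (Fin d) → ℂ}
    (hf : Measurable f) (C : ℝ) {s : ℝ} (hs : 0 < s) {x z : EuclideanSpace ℝ (Fin d)}
    (hzx : ‖z - x‖ ≤ s⁻¹) (k : ℕ) :
    ∫⁻ y, (ball 0 (2 ^ (k + 1) / s)).indicator (fun y => ENNReal.ofReal (s ^ d) *
        (ENNReal.ofReal C * ((2 : ℝ≥0∞) ^ (d + 1))⁻¹ ^ k) * ‖f (z - y)‖ₑ) y ≤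
      ENNReal.ofReal C * 4 ^ d * volume (ball (0 : EuclideanSpace ℝ (Fin d)) 1) *
        hlMaximal d f x * 2⁻¹ ^ k := by
  set ρ : ℝ := 2 ^ (k + 1) / s
  have hscale : ENNReal.ofReal (s ^ d) * ENNReal.ofReal ((2 * ρ) ^ d) = 4 ^ d * (2 ^ d) ^ k := by
    rw [← ENNReal.ofReal_mul (by positivity), ← mul_pow,
      show s * (2 * ρ) = 2 ^ (k + 2) by simp only [ρ]; field_simp; ring,
      ENNReal.ofReal_pow (by positivity), ENNReal.ofReal_pow zero_le_two, ENNReal.ofReal_ofNat]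
    ring
  have hdecay : ((2 : ℝ≥0∞) ^ (d + 1))⁻¹ ^ k * (2 ^ d) ^ k = 2⁻¹ ^ k := by
    rw [← mul_pow, pow_succ, ENNReal.mul_inv (by simp) (by simp), mul_comm, ← mul_assoc,
      ENNReal.mul_inv_cancel (by simp) (by simp), one_mul]
  have hzρ : ‖z - x‖ ≤ ρ :=
    hzx.trans (by simp only [ρ, inv_eq_one_div]; gcongr; exact one_le_pow₀ one_le_two)
  rw [lintegral_indicator measurableSet_ball, lintegral_const_mul _
    (f := fun y => ‖f (z - y)‖ₑ) (hf.comp (measurable_const.sub measurable_id)).enorm]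
  calc ENNReal.ofReal (s ^ d) * (ENNReal.ofReal C * ((2 : ℝ≥0∞) ^ (d + 1))⁻¹ ^ k) *
        ∫⁻ y in ball 0 ρ, ‖f (z - y)‖ₑ
      ≤ ENNReal.ofReal (s ^ d) * (ENNReal.ofReal C * ((2 : ℝ≥0∞) ^ (d + 1))⁻¹ ^ k) *
          (ENNReal.ofReal ((2 * ρ) ^ d) * volume (ball (0 : EuclideanSpace ℝ (Fin d)) 1) *
            hlMaximal d f x) := by
        gcongr
        exact setLIntegral_ball_comp_sub_le_hlMaximal f (by positivity) hzρ
    _ = ENNReal.ofReal C * ((2 : ℝ≥0∞) ^ (d + 1))⁻¹ ^ k *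
          (ENNReal.ofReal (s ^ d) * ENNReal.ofReal ((2 * ρ) ^ d)) *
          volume (ball (0 : EuclideanSpace ℝ (Fin d)) 1) * hlMaximal d f x := by ring
    _ = _ := by rw [hscale, ← hdecay]; ring

/-- Dominate `ψ` by dyadic ball indicators: the ball of radius `2^{k+1}/s` carries height
`2^{-k(d+1)}`, while the mass of `f` on its translate to `z` is at most `(2^{k+2}/s)^d |B₁| Mf(x)`;
the decay of `ψ` beats this growth `2^{kd}`. -/
lemma lintegral_enorm_mul_dilation_le_hlMaximal {f : EuclideanSpace ℝ (Fin d) → ℂ}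
    (hf : Measurable f) {ψ : EuclideanSpace ℝ (Fin d) → ℂ} {C : ℝ}
    (hψ : ∀ w, (1 + ‖w‖) ^ (d + 1) * ‖ψ w‖ ≤ C) {s : ℝ} (hs : 0 < s)
    {x z : EuclideanSpace ℝ (Fin d)} (hzx : ‖z - x‖ ≤ s⁻¹) :
    ∫⁻ y, ‖f (z - y)‖ₑ * (ENNReal.ofReal (s ^ d) * ‖ψ (s • y)‖ₑ) ≤
      ENNReal.ofReal C * 2 ^ (2 * d + 1) * volume (ball (0 : EuclideanSpace ℝ (Fin d)) 1) *
        hlMaximal d f x := by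
  set F : ℕ → EuclideanSpace ℝ (Fin d) → ℝ≥0∞ := fun k => (ball 0 (2 ^ (k + 1) / s)).indicator
    fun y => ENNReal.ofReal (s ^ d) * (ENNReal.ofReal C * ((2 : ℝ≥0∞) ^ (d + 1))⁻¹ ^ k) *
      ‖f (z - y)‖ₑ
  have hpointwise : ∀ y, ‖f (z - y)‖ₑ * (ENNReal.ofReal (s ^ d) * ‖ψ (s • y)‖ₑ) ≤ ∑' k, F k y := by
    intro y
    grw [enorm_le_tsum_indicator_ball_of_decay hψ, ← ENNReal.tsum_mul_left,
      ← ENNReal.tsum_mul_left]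
    refine (tsum_congr fun k => ?_).le
    rw [indicator_ball_smul hs]
    by_cases hy : y ∈ ball (0 : EuclideanSpace ℝ (Fin d)) (2 ^ (k + 1) / s)
    · simp only [F, Set.indicator_of_mem hy]; ring
    · simp only [F, Set.indicator_of_notMem hy, mul_zero]
  calc ∫⁻ y, ‖f (z - y)‖ₑ * (ENNReal.ofReal (s ^ d) * ‖ψ (s • y)‖ₑ)
      ≤ ∫⁻ y, ∑' k, F k y := lintegral_mono hpointwise
    _ = ∑' k, ∫⁻ y, F k y := lintegral_tsum fun k =>
        ((measurable_const.mul (hf.comp (measurable_const.sub measurable_id)).enorm).indicator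
          measurableSet_ball).aemeasurable
    _ ≤ ∑' k : ℕ, ENNReal.ofReal C * 4 ^ d * volume (ball (0 : EuclideanSpace ℝ (Fin d)) 1) *
        hlMaximal d f x * 2⁻¹ ^ k :=
        ENNReal.tsum_le_tsum (lintegral_indicator_dyadic_ball_le_hlMaximal hf C hs hzx)
    _ = _ := by
        rw [ENNReal.tsum_mul_left, ENNReal.tsum_geometric, ENNReal.one_sub_inv_two, inv_inv,
          pow_succ, pow_mul]
        ring

lemma enorm_dilate (φ : EuclideanSpace ℝ (Fin d) → ℂ) (l : ℤ) (y : EuclideanSpace ℝ (Fin d)) :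
    ‖dilate d φ l y‖ₑ = ENNReal.ofReal (((2 : ℝ) ^ l) ^ d) * ‖φ ((2 : ℝ) ^ l • y)‖ₑ := by
  rw [dilate, enorm_mul, ← ofReal_norm, norm_zpow, Complex.norm_real, Real.norm_two, zpow_mul,
    zpow_natCast]

lemma exists_enorm_conv_dilate_le_hlMaximal (φ : SchwartzMap (EuclideanSpace ℝ (Fin d)) ℂ) :
    ∃ K : ℝ≥0, ∀ f : EuclideanSpace ℝ (Fin d) → ℂ, Measurable f → ∀ (l : ℤ)
      (x z : EuclideanSpace ℝ (Fin d)), ‖z - x‖ ≤ (2 : ℝ) ^ (-l) →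
        ‖conv d f (dilate d φ l) z‖ₑ ≤ K * hlMaximal d f x := by
  set C := 2 ^ (d + 1) * (Finset.Iic (d + 1, 0)).sup
    (fun m => SchwartzMap.seminorm ℝ m.1 m.2) φ
  have hφ : ∀ w, (1 + ‖w‖) ^ (d + 1) * ‖φ w‖ ≤ C := fun w => by
    simpa using SchwartzMap.one_add_le_sup_seminorm_apply (m := (d + 1, 0)) le_rfl le_rfl φ w
  set K := ENNReal.ofReal C * 2 ^ (2 * d + 1) * volume (ball (0 : EuclideanSpace ℝ (Fin d)) 1)
  have hK : K ≠ ∞ := by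
    simp only [K]
    exact ENNReal.mul_ne_top (ENNReal.mul_ne_top ENNReal.ofReal_ne_top (by simp))
      measure_ball_lt_top.ne
  refine ⟨K.toNNReal, fun f hf l x z hzx => ?_⟩
  rw [ENNReal.coe_toNNReal hK]
  calc ‖conv d f (dilate d φ l) z‖ₑ
      ≤ ∫⁻ y, ‖f (z - y)‖ₑ * (ENNReal.ofReal (((2 : ℝ) ^ l) ^ d) * ‖φ ((2 : ℝ) ^ l • y)‖ₑ) := by
        refine (enorm_integral_le_lintegral_enorm _).trans_eq (lintegral_congr fun y => ?_)
        rw [enorm_mul, enorm_dilate]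
    _ ≤ K * hlMaximal d f x :=
        lintegral_enorm_mul_dilation_le_hlMaximal hf hφ (by positivity)
          (by rwa [← zpow_neg])

variable (d)

theorem triangle_low_high_pointwise_control
    (μ : Measure (Matrix (Fin d) (Fin d) ℝ)) [IsProbabilityMeasure μ]
    (hμsupp : μ {A | A ∉ Matrix.orthogonalGroup (Fin d) ℝ} = 0)
    (hμinv : ∀ A ∈ Matrix.orthogonalGroup (Fin d) ℝ, μ.map (fun B => A * B) = μ)
    (u v : EuclideanSpace ℝ (Fin d)) (hu : ‖u‖ = 1) (hv : ‖v‖ = 1)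
    (σ : Measure (EuclideanSpace ℝ (Fin d))) [IsProbabilityMeasure σ]
    (hσsupp : σ (Metric.sphere (0 : EuclideanSpace ℝ (Fin d)) 1)ᶜ = 0)
    (hσinv : ∀ T : EuclideanSpace ℝ (Fin d) ≃ₗᵢ[ℝ] EuclideanSpace ℝ (Fin d), σ.map T = σ)
    (φ : SchwartzMap (EuclideanSpace ℝ (Fin d)) ℂ) :
    ∃ C : ℝ≥0, ∀ f g : EuclideanSpace ℝ (Fin d) → ℂ, Measurable f → Measurable g →
      ∀ x : EuclideanSpace ℝ (Fin d),
        (⨆ l : ℤ, (‖triangleLH d μ u v (⇑φ) l f g x‖₊ : ℝ≥0∞)) ≤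
          C * hlMaximal d f x * lacSphMaximal d σ g x := by
  obtain ⟨K, hK⟩ := exists_enorm_conv_dilate_le_hlMaximal φ
  refine ⟨K, fun f g hf hg x => iSup_le fun l => ?_⟩
  set t := (2 : ℝ) ^ (-l)
  have hg_meas : Measurable fun y => ‖g (x - t • y)‖ₑ :=
    (hg.comp (measurable_const.sub (measurable_const_smul t))).enorm
  calc ‖triangleLH d μ u v φ l f g x‖ₑ
      ≤ ∫⁻ R, ‖conv d f (dilate d φ l) (x - t • rotAct d R u)‖ₑ *
          ‖g (x - t • rotAct d R v)‖ₑ ∂μ := by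
        refine (enorm_integral_le_lintegral_enorm _).trans_eq (lintegral_congr fun R => ?_)
        rw [enorm_mul]
    _ ≤ ∫⁻ R, K * hlMaximal d f x * ‖g (x - t • rotAct d R v)‖ₑ ∂μ := by
        refine lintegral_mono_ae ?_
        filter_upwards [ae_iff.mpr hμsupp] with R hR
        gcongr
        refine hK f hf l x _ (le_of_eq ?_)
        rw [sub_sub_cancel_left, norm_neg, norm_smul, norm_rotAct hR, hu, mul_one,
          Real.norm_of_nonneg (by positivity)]
    _ = K * hlMaximal d f x * ∫⁻ y, ‖g (x - t • y)‖ₑ ∂σ := by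
        rw [lintegral_const_mul _ (f := fun R => ‖g (x - t • rotAct d R v)‖ₑ)
            (hg_meas.comp (continuous_rotAct_apply v).measurable),
          lintegral_rotAct_eq_lintegral_sphere hμsupp hμinv hσsupp hσinv hv hg_meas]
    _ ≤ K * hlMaximal d f x * lacSphMaximal d σ g x := by
        gcongr
        exact le_iSup (fun l : ℤ => ∫⁻ y, ‖g (x - (2 : ℝ) ^ (-l) • y)‖₊ ∂σ) l
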